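/- arXiv:1408.3501 — 6 statements merged into one kernel-verified Lean document; each statement's English description precedes it below -/
import Mathlib

section
/- For any set of d integers I ⊆ [n] (with n ≥ d+1), the condition 'for every x, y ∈ [n] \ I, the number of elements z ∈ I with x < z < y is even' is equivalent to: I is a union of blocks of consecutive integers, each block either containing 1, containing n, or having even cardinality. -/
private lemma gale_aux (n : ℕ) (I : Finset ℕ) (hIsub : I ⊆ Finset.Icc 1 n)
    (hb : ∀ a b : ℕ, a ≤ b → Finset.Icc a b ⊆ I → a - 1 ∉ I → b + 1 ∉ I →
        (a = 1 ∨ b = n ∨ Even (b + 1 - a))) :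
    ∀ k x y, y - x ≤ k → 1 ≤ x → y ≤ n → x ∉ I → y ∉ I →
      Even ((I.filter (fun z => x < z ∧ z < y)).card) := by
  intro k
  induction k with
  | zero =>
      intro x y hk _ _ _ _
      have : (I.filter (fun z => x < z ∧ z < y)) = ∅ := by
        rw [Finset.filter_eq_empty_iff]; intro z _; omega
      simp [this]
  | succ k ih =>
      intro x y hk hx hy hxI hyI
      by_cases hne : (I.filter (fun z => x < z ∧ z < y)).Nonempty
      · obtain ⟨a, haS, hamin⟩ :=
          (I.filter (fun z => x < z ∧ z < y)).exists_min_image id hne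
        simp only [Finset.mem_filter] at haS
        obtain ⟨haI, hxa, hay⟩ := haS
        have hex : ∃ m, a + m ∉ I := by
          refine ⟨n + 1, fun h => ?_⟩
          have := hIsub h; simp only [Finset.mem_Icc] at this; omega
        have hm0 : 0 < Nat.find hex := by
          rcases Nat.eq_zero_or_pos (Nat.find hex) with h | h
          · exfalso
            have hs := Nat.find_spec hex
            rw [h] at hs; exact hs haI
          · exact h
        set m := Nat.find hex with hm
        set b := a + m - 1 with hbdef
        have hab : a ≤ b := by omega
        have hIcc : Finset.Icc a b ⊆ I := by
          intro z hz
          simp only [Finset.mem_Icc] at hz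
          have h1 : ¬ (a + (z - a) ∉ I) := Nat.find_min hex (by omega)
          have hz' : a + (z - a) = z := by omega
          rw [hz'] at h1; exact not_not.mp h1
        have hb1 : b + 1 ∉ I := by
          have hs := Nat.find_spec hex
          have heq : a + m = b + 1 := by omega
          rwa [heq] at hs
        have ha1 : a - 1 ∉ I := by
          intro hcon
          rcases Nat.lt_or_ge x (a - 1) with h | h
          · have : a ≤ a - 1 := hamin (a - 1)
              (Finset.mem_filter.mpr ⟨hcon, h, by omega⟩)
            omega
          · have : a - 1 = x := by omega
            rw [this] at hcon; exact hxI hcon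
        have hby : b < y := by
          by_contra h
          exact hyI (hIcc (Finset.mem_Icc.mpr ⟨by omega, by omega⟩))
        have heven : Even (b + 1 - a) := by
          rcases hb a b hab hIcc ha1 hb1 with h | h | h
          · omega
          · omega
          · exact h
        have hsplit : I.filter (fun z => x < z ∧ z < y)
            = Finset.Icc a b ∪ I.filter (fun z => b + 1 < z ∧ z < y) := by
          ext z
          simp only [Finset.mem_filter, Finset.mem_union, Finset.mem_Icc]
          constructor
          · rintro ⟨hzI, hxz, hzy⟩
            have haz : a ≤ z := hamin z (Finset.mem_filter.mpr ⟨hzI, hxz, hzy⟩)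
            rcases Nat.lt_or_ge b z with h | h
            · have : z ≠ b + 1 := fun hcon => hb1 (hcon ▸ hzI)
              exact Or.inr ⟨hzI, by omega, hzy⟩
            · exact Or.inl ⟨haz, h⟩
          · rintro (⟨h1, h2⟩ | ⟨h1, h2, h3⟩)
            · exact ⟨hIcc (Finset.mem_Icc.mpr ⟨h1, h2⟩), by omega, by omega⟩
            · exact ⟨h1, by omega, h3⟩
        have hdisj : Disjoint (Finset.Icc a b)
            (I.filter (fun z => b + 1 < z ∧ z < y)) := by
          rw [Finset.disjoint_left]
          intro z hz hz2
          simp only [Finset.mem_Icc] at hz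
          simp only [Finset.mem_filter] at hz2
          omega
        rw [hsplit, Finset.card_union_of_disjoint hdisj, Nat.card_Icc]
        exact heven.add (ih (b + 1) y (by omega) (by omega) hy hb1 hyI)
      · rw [Finset.not_nonempty_iff_eq_empty] at hne
        simp [hne]

/-- Gale's evenness condition for a `d`-subset `I` of `[n]` is equivalent to:
every maximal block `[a,b]` of consecutive integers contained in `I` either
contains `1`, contains `n`, or has even cardinality. -/
theorem stmt_0 (n d : ℕ) (hnd : d + 1 ≤ n) (I : Finset ℕ)
    (hIsub : I ⊆ Finset.Icc 1 n) (hcard : I.card = d) :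
    (∀ x ∈ Finset.Icc 1 n, ∀ y ∈ Finset.Icc 1 n, x ∉ I → y ∉ I →
        Even ((I.filter (fun z => x < z ∧ z < y)).card)) ↔
      (∀ a b : ℕ, a ≤ b → Finset.Icc a b ⊆ I → a - 1 ∉ I → b + 1 ∉ I →
        (a = 1 ∨ b = n ∨ Even (b + 1 - a))) := by
  constructor
  · intro h a b hab hsub ha1 hb1
    have haI : a ∈ I := hsub (Finset.mem_Icc.mpr ⟨le_refl a, hab⟩)
    have hbI : b ∈ I := hsub (Finset.mem_Icc.mpr ⟨hab, le_refl b⟩)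
    have han := hIsub haI; have hbn := hIsub hbI
    simp only [Finset.mem_Icc] at han hbn
    by_cases ha : a = 1
    · exact Or.inl ha
    by_cases hbn' : b = n
    · exact Or.inr (Or.inl hbn')
    refine Or.inr (Or.inr ?_)
    have key := h (a - 1) (Finset.mem_Icc.mpr ⟨by omega, by omega⟩)
      (b + 1) (Finset.mem_Icc.mpr ⟨by omega, by omega⟩) ha1 hb1
    have heq : I.filter (fun z => a - 1 < z ∧ z < b + 1) = Finset.Icc a b := by
      ext z
      simp only [Finset.mem_filter, Finset.mem_Icc]
      constructor
      · rintro ⟨_, h1, h2⟩; omega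
      · rintro ⟨h1, h2⟩
        exact ⟨hsub (Finset.mem_Icc.mpr ⟨h1, h2⟩), by omega, by omega⟩
    rwa [heq, Nat.card_Icc] at key
  · intro h x hx y hy hxI hyI
    simp only [Finset.mem_Icc] at hx hy
    exact gale_aux n I hIsub h (y - x) x y le_rfl hx.1 hy.2 hxI hyI
end

section
/- Let P₁, ..., P_k be a partition of the path on vertex set [n] (with edges {i,i+1}) into vertex-disjoint subpaths of consecutive integers. Then every face of the join complex P₁ * ... * P_k (i.e., every set of the form F₁ ∪ ... ∪ F_k with each F_j a face of P_j, so F_j is either empty, a vertex, or an edge {i,i+1} within P_j) whose cardinality is 2k satisfies Gale's evenness condition for C(n, 2k), i.e., is a facet of the cyclic 2k-polytope on n vertices. -/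
/-- If `[n]` is partitioned into `k` consecutive subpaths with cut points
`0 = c 0 < c 1 < ⋯ < c k = n` (the `j`-th path having vertex set `[c j + 1, c (j+1)]`),
then every face of the join of these paths (each `F j` being ∅, a vertex, or an
edge `{v, v+1}` of the `j`-th path) with `2k` elements satisfies Gale's evenness
condition for `C(n, 2k)`, i.e. is a facet of the cyclic `2k`-polytope on `n` vertices. -/
theorem stmt_2 (n k : ℕ) (hk : 1 ≤ k) (c : ℕ → ℕ) (hc0 : c 0 = 0) (hck : c k = n)
    (hmono : ∀ j < k, c j < c (j + 1))
    (F : ℕ → Finset ℕ)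
    (hface : ∀ j < k, F j = ∅ ∨ (∃ v, c j + 1 ≤ v ∧ v ≤ c (j + 1) ∧ F j = {v}) ∨
      (∃ v, c j + 1 ≤ v ∧ v + 1 ≤ c (j + 1) ∧ F j = {v, v + 1}))
    (I : Finset ℕ) (hI : I = (Finset.range k).biUnion F) (hcard : I.card = 2 * k) :
    ∀ x ∈ Finset.Icc 1 n, ∀ y ∈ Finset.Icc 1 n, x ∉ I → y ∉ I →
      Even ((I.filter (fun z => x < z ∧ z < y)).card) := by
  intro x hx y hy hxI hyI
  -- monotonicity of c
  have hmono' : ∀ j, j ≤ k → ∀ i, i ≤ j → c i ≤ c j := by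
    intro j
    induction j with
    | zero => intro _ i hi; rw [Nat.le_zero.mp hi]
    | succ m ih =>
        intro hjk i hi
        rcases Nat.lt_succ_iff_lt_or_eq.mp (Nat.lt_succ_of_le hi) with h | h
        · have h1 : c i ≤ c m := ih (by omega) i (by omega)
          have h2 : c m < c (m + 1) := hmono m (by omega)
          omega
        · rw [h]
  have hsub : ∀ j < k, F j ⊆ Finset.Ioc (c j) (c (j + 1)) := by
    intro j hj
    rcases hface j hj with h | ⟨v, h1, h2, h⟩ | ⟨v, h1, h2, h⟩ <;> rw [h]
    · exact Finset.empty_subset _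
    · intro a ha
      simp only [Finset.mem_singleton] at ha
      simp only [Finset.mem_Ioc]
      omega
    · intro a ha
      simp only [Finset.mem_insert, Finset.mem_singleton] at ha
      simp only [Finset.mem_Ioc]
      omega
  have hdisj : ∀ i ∈ Finset.range k, ∀ j ∈ Finset.range k, i ≠ j → Disjoint (F i) (F j) := by
    have key : ∀ i j, i < j → j < k → Disjoint (F i) (F j) := by
      intro i j hij hjk
      rw [Finset.disjoint_left]
      intro a hai haj
      have h1 := hsub i (by omega) hai
      have h2 := hsub j hjk haj
      simp only [Finset.mem_Ioc] at h1 h2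
      have : c (i + 1) ≤ c j := hmono' j (by omega) (i + 1) (by omega)
      omega
    intro i hi j hj hne
    simp only [Finset.mem_range] at hi hj
    rcases lt_or_gt_of_ne hne with h | h
    · exact key i j h hj
    · exact (key j i h hi).symm
  have hsum : ∑ j ∈ Finset.range k, (F j).card = 2 * k := by
    rw [← Finset.card_biUnion hdisj, ← hI, hcard]
  have hle2 : ∀ j ∈ Finset.range k, (F j).card ≤ 2 := by
    intro j hj
    simp only [Finset.mem_range] at hj
    rcases hface j hj with h | ⟨v, _, _, h⟩ | ⟨v, _, _, h⟩ <;> rw [h]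
    · simp
    · simp
    · exact Finset.card_insert_le _ _ |>.trans (by simp)
  have hcard2 : ∀ j ∈ Finset.range k, (F j).card = 2 := by
    by_contra hcon
    push_neg at hcon
    obtain ⟨j0, hj0, hne⟩ := hcon
    have hlt : (F j0).card < 2 := lt_of_le_of_ne (hle2 j0 hj0) hne
    have : ∑ j ∈ Finset.range k, (F j).card < ∑ _j ∈ Finset.range k, 2 :=
      Finset.sum_lt_sum hle2 ⟨j0, hj0, hlt⟩
    simp only [Finset.sum_const, Finset.card_range, smul_eq_mul] at this
    omega
  -- each F j is an edge
  have hedge : ∀ j ∈ Finset.range k, ∃ v, F j = {v, v + 1} := by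
    intro j hj
    have hjk : j < k := Finset.mem_range.mp hj
    rcases hface j hjk with h | ⟨v, _, _, h⟩ | ⟨v, _, _, h⟩
    · exfalso; have := hcard2 j hj; rw [h] at this; simp at this
    · exfalso; have := hcard2 j hj; rw [h] at this; simp at this
    · exact ⟨v, h⟩
  have hdisjf : ∀ i ∈ Finset.range k, ∀ j ∈ Finset.range k, i ≠ j →
      Disjoint ((F i).filter (fun z => x < z ∧ z < y))
        ((F j).filter (fun z => x < z ∧ z < y)) := by
    intro i hi j hj hne
    exact Finset.disjoint_filter_filter (hdisj i hi j hj hne)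
  rw [hI, Finset.filter_biUnion, Finset.card_biUnion hdisjf]
  apply Finset.even_sum
  intro j hj
  obtain ⟨v, hv⟩ := hedge j hj
  have hvI : v ∈ I := by
    rw [hI, Finset.mem_biUnion]
    exact ⟨j, hj, by rw [hv]; simp⟩
  have hv1I : v + 1 ∈ I := by
    rw [hI, Finset.mem_biUnion]
    exact ⟨j, hj, by rw [hv]; simp⟩
  have hxv : x ≠ v := fun h => hxI (h ▸ hvI)
  have hyv1 : y ≠ v + 1 := fun h => hyI (h ▸ hv1I)
  rw [hv]
  by_cases hp : x < v ∧ v < y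
  · have hfe : ({v, v + 1} : Finset ℕ).filter (fun z => x < z ∧ z < y) = {v, v + 1} := by
      rw [Finset.filter_eq_self]
      intro z hz
      simp only [Finset.mem_insert, Finset.mem_singleton] at hz
      rcases hz with rfl | rfl
      · exact hp
      · omega
    rw [hfe, Finset.card_insert_of_notMem (by simp), Finset.card_singleton]
    exact even_two
  · have hfe : ({v, v + 1} : Finset ℕ).filter (fun z => x < z ∧ z < y) = ∅ := by
      rw [Finset.filter_eq_empty_iff]
      intro z hz
      simp only [Finset.mem_insert, Finset.mem_singleton] at hz
      rcases hz with rfl | rfl <;> omega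
    rw [hfe, Finset.card_empty]
    exact Even.zero
end

section
/- Let B ⊆ [n-1] × [m-1] be a finite set of grid cells. B is grid-connected (the induced subgraph of B in the grid graph, where (i,j) and (i',j') are adjacent iff |i-i'|+|j-j'| = 1, is connected) if and only if the union of the closed unit squares [i,i+1] × [j,j+1] for (i,j) ∈ B has connected interior. -/
/-- Two grid cells are adjacent iff they differ by 1 in exactly one coordinate. -/
def gridAdj (u v : ℕ × ℕ) : Prop :=
  (u.1 = v.1 ∧ (v.2 = u.2 + 1 ∨ u.2 = v.2 + 1)) ∨
    (u.2 = v.2 ∧ (v.1 = u.1 + 1 ∨ u.1 = v.1 + 1))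

/-- `B` is grid-connected: the induced subgraph of `B` in the grid graph is connected. -/
def gridConnected (B : Finset (ℕ × ℕ)) : Prop :=
  B.Nonempty ∧ ∀ p ∈ B, ∀ q ∈ B,
    Relation.ReflTransGen (fun u v => u ∈ B ∧ v ∈ B ∧ gridAdj u v) p q

namespace Stmt3

def sq (p : ℕ × ℕ) : Set (ℝ × ℝ) :=
  Set.Icc (((p.1 : ℝ), (p.2 : ℝ)) : ℝ × ℝ) (((p.1 : ℝ) + 1, (p.2 : ℝ) + 1) : ℝ × ℝ)

def KK (B : Finset (ℕ × ℕ)) : Set (ℝ × ℝ) := ⋃ p ∈ B, sq p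

def osq (p : ℕ × ℕ) : Set (ℝ × ℝ) :=
  Set.Ioo (p.1 : ℝ) ((p.1 : ℝ) + 1) ×ˢ Set.Ioo (p.2 : ℝ) ((p.2 : ℝ) + 1)

noncomputable def ctr (p : ℕ × ℕ) : ℝ × ℝ := ((p.1 : ℝ) + 1/2, (p.2 : ℝ) + 1/2)

lemma mem_sq {p : ℕ × ℕ} {z : ℝ × ℝ} :
    z ∈ sq p ↔ (p.1 : ℝ) ≤ z.1 ∧ z.1 ≤ p.1 + 1 ∧ (p.2 : ℝ) ≤ z.2 ∧ z.2 ≤ p.2 + 1 := by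
  simp [sq, Set.mem_Icc, Prod.le_def]; tauto

lemma mem_KK {B : Finset (ℕ × ℕ)} {z : ℝ × ℝ} : z ∈ KK B ↔ ∃ p ∈ B, z ∈ sq p := by
  simp [KK]

lemma ctr_mem (p : ℕ × ℕ) : ctr p ∈ osq p := by
  refine ⟨⟨?_, ?_⟩, ⟨?_, ?_⟩⟩ <;> simp [ctr] <;> norm_num

lemma isOpen_osq (p : ℕ × ℕ) : IsOpen (osq p) := isOpen_Ioo.prod isOpen_Ioo

lemma preconn_osq (p : ℕ × ℕ) : IsPreconnected (osq p) :=
  ((convex_Ioo _ _).prod (convex_Ioo _ _)).isPreconnected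

lemma osq_subset_sq (p : ℕ × ℕ) : osq p ⊆ sq p := by
  rintro z ⟨⟨h1, h2⟩, h3, h4⟩
  exact mem_sq.mpr ⟨h1.le, h2.le, h3.le, h4.le⟩

lemma osq_subset_int {B : Finset (ℕ × ℕ)} {p : ℕ × ℕ} (hp : p ∈ B) :
    osq p ⊆ interior (KK B) :=
  interior_maximal (fun z hz => mem_KK.mpr ⟨p, hp, osq_subset_sq p hz⟩) (isOpen_osq p)

lemma cell_coord_eq {c d : ℕ} {w : ℝ} (h1 : (c : ℝ) < w) (h2 : w < c + 1)
    (h3 : (d : ℝ) ≤ w) (h4 : w ≤ d + 1) : d = c := by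
  have hdc : (d : ℝ) < c + 1 := lt_of_le_of_lt h3 h2
  have hcd : (c : ℝ) < d + 1 := lt_of_lt_of_le h1 h4
  have h5 : d < c + 1 := by exact_mod_cast hdc
  have h6 : c < d + 1 := by exact_mod_cast hcd
  omega

lemma cell_eq {c d : ℕ × ℕ} {w : ℝ × ℝ} (hw : w ∈ osq c) (hd : w ∈ sq d) : d = c := by
  obtain ⟨⟨a1, a2⟩, a3, a4⟩ := hw
  obtain ⟨b1, b2, b3, b4⟩ := mem_sq.mp hd
  exact Prod.ext (cell_coord_eq a1 a2 b1 b2) (cell_coord_eq a3 a4 b3 b4)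

lemma shift {a t δ ε : ℝ} (h1 : a ≤ t) (h2 : t ≤ a + 1) (hδ0 : 0 < δ) (hδ1 : δ ≤ 1/2)
    (hδε : δ ≤ ε / 2) (hε : 0 < ε) :
    a < t + δ * (a + 1/2 - t) ∧ t + δ * (a + 1/2 - t) < a + 1 ∧
      |t + δ * (a + 1/2 - t) - t| < ε := by
  have k1 : (0:ℝ) ≤ (t - a) * (1 - δ) :=
    mul_nonneg (by linarith) (by linarith)
  have k2 : (0:ℝ) ≤ (a + 1 - t) * (1 - δ) :=
    mul_nonneg (by linarith) (by linarith)
  have k3 : δ * (a + 1/2 - t) ≤ δ * (1/2) :=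
    mul_le_mul_of_nonneg_left (by linarith) hδ0.le
  have k4 : δ * (-(1/2)) ≤ δ * (a + 1/2 - t) :=
    mul_le_mul_of_nonneg_left (by linarith) hδ0.le
  refine ⟨by nlinarith, by nlinarith, ?_⟩
  rw [abs_lt]
  constructor <;> nlinarith

lemma lemA {B : Finset (ℕ × ℕ)} {z : ℝ × ℝ} {c : ℕ × ℕ}
    (hz : z ∈ interior (KK B)) (hc : z ∈ sq c) : c ∈ B := by
  have hK : KK B ∈ nhds z := mem_interior_iff_mem_nhds.mp hz
  obtain ⟨ε, hε, hball⟩ := Metric.mem_nhds_iff.mp hK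
  obtain ⟨h1, h2, h3, h4⟩ := mem_sq.mp hc
  set δ : ℝ := min (1/2) (ε/2) with hδ
  have hδ0 : 0 < δ := lt_min (by norm_num) (by linarith)
  have hδ1 : δ ≤ 1/2 := min_le_left _ _
  have hδε : δ ≤ ε/2 := min_le_right _ _
  obtain ⟨s1, s2, s3⟩ := shift h1 h2 hδ0 hδ1 hδε hε
  obtain ⟨t1, t2, t3⟩ := shift h3 h4 hδ0 hδ1 hδε hε
  set w : ℝ × ℝ := (z.1 + δ * ((c.1:ℝ) + 1/2 - z.1), z.2 + δ * ((c.2:ℝ) + 1/2 - z.2)) with hw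
  have hwo : w ∈ osq c := ⟨⟨s1, s2⟩, t1, t2⟩
  have hwK : w ∈ KK B := by
    apply hball
    rw [Metric.mem_ball, Prod.dist_eq]
    exact max_lt (by rw [Real.dist_eq]; exact s3) (by rw [Real.dist_eq]; exact t3)
  obtain ⟨d, hd, hwd⟩ := mem_KK.mp hwK
  rwa [cell_eq hwo hwd] at hd


lemma oneD {c : ℕ} {x : ℝ} (hc : 1 ≤ c) (h1 : (c : ℝ) ≤ x) (h2 : x ≤ c + 1) :
    ∃ lo hi : ℕ, (lo : ℝ) < x ∧ x < hi ∧ (lo : ℝ) ≤ c ∧ (c : ℝ) + 1 ≤ hi ∧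
      ∀ w : ℝ, (lo : ℝ) < w → w < hi →
        ∃ e : ℕ, (e : ℝ) ≤ w ∧ w ≤ e + 1 ∧ (e : ℝ) ≤ x ∧ x ≤ e + 1 := by
  have hcast : ((c - 1 : ℕ) : ℝ) = (c : ℝ) - 1 := by
    push_cast [Nat.cast_sub hc]; ring
  rcases eq_or_lt_of_le h1 with h1' | h1'
  · -- x = c
    refine ⟨c - 1, c + 1, ?_, ?_, ?_, ?_, ?_⟩
    · rw [hcast]; linarith
    · push_cast; linarith
    · rw [hcast]; linarith
    · push_cast; linarith
    · intro w hw1 hw2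
      rcases le_or_gt w c with h | h
      · exact ⟨c - 1, by rw [hcast] at hw1 ⊢; linarith, by rw [hcast]; linarith,
          by rw [hcast]; linarith, by rw [hcast]; linarith⟩
      · push_cast at hw2
        exact ⟨c, h.le, by linarith, by linarith, by linarith⟩
  · rcases eq_or_lt_of_le h2 with h2' | h2'
    · -- x = c + 1
      refine ⟨c, c + 2, h1', by push_cast; linarith, le_refl _, by push_cast; linarith, ?_⟩
      intro w hw1 hw2
      push_cast at hw2
      rcases le_or_gt w ((c : ℝ) + 1) with h | h
      · exact ⟨c, hw1.le, h, h1, h2⟩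
      · exact ⟨c + 1, by push_cast; linarith, by push_cast; linarith,
          by push_cast; linarith, by push_cast; linarith⟩
    · refine ⟨c, c + 1, h1', by push_cast; linarith, le_refl _, by push_cast; linarith, ?_⟩
      intro w hw1 hw2
      push_cast at hw2
      exact ⟨c, hw1.le, by linarith, by linarith, by linarith⟩

lemma patch {B : Finset (ℕ × ℕ)}
    (hsub : ∀ p ∈ B, 1 ≤ p.1 ∧ 1 ≤ p.2) {x : ℝ × ℝ}
    (hx : x ∈ interior (KK B)) :
    ∃ c ∈ B, ∃ t : Set (ℝ × ℝ),
      IsPreconnected t ∧ t ⊆ interior (KK B) ∧ x ∈ t ∧ osq c ⊆ t := by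
  obtain ⟨c, hc, hxc⟩ := mem_KK.mp (interior_subset hx)
  obtain ⟨h11, h12, h21, h22⟩ := mem_sq.mp hxc
  obtain ⟨hc1, hc2⟩ := hsub c hc
  obtain ⟨lo1, hi1, ha1, ha2, ha3, ha4, ha5⟩ := oneD hc1 h11 h12
  obtain ⟨lo2, hi2, hb1, hb2, hb3, hb4, hb5⟩ := oneD hc2 h21 h22
  refine ⟨c, hc, Set.Ioo (lo1 : ℝ) hi1 ×ˢ Set.Ioo (lo2 : ℝ) hi2,
    ((convex_Ioo _ _).prod (convex_Ioo _ _)).isPreconnected, ?_, ⟨⟨ha1, ha2⟩, hb1, hb2⟩, ?_⟩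
  · apply interior_maximal ?_ (isOpen_Ioo.prod isOpen_Ioo)
    rintro w ⟨⟨hw1, hw2⟩, hw3, hw4⟩
    obtain ⟨e1, he1, he2, he3, he4⟩ := ha5 w.1 hw1 hw2
    obtain ⟨e2, hf1, hf2, hf3, hf4⟩ := hb5 w.2 hw3 hw4
    have hxB : (e1, e2) ∈ B := lemA hx (mem_sq.mpr ⟨he3, he4, hf3, hf4⟩)
    exact mem_KK.mpr ⟨(e1, e2), hxB, mem_sq.mpr ⟨he1, he2, hf1, hf2⟩⟩
  · rintro w ⟨⟨hw1, hw2⟩, hw3, hw4⟩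
    exact ⟨⟨lt_of_le_of_lt ha3 hw1, lt_of_lt_of_le hw2 ha4⟩,
      lt_of_le_of_lt hb3 hw3, lt_of_lt_of_le hw4 hb4⟩

lemma dominoH {B : Finset (ℕ × ℕ)} {b d : ℕ × ℕ} (hb : b ∈ B) (hd : d ∈ B)
    (h1 : b.2 = d.2) (h2 : d.1 = b.1 + 1) :
    ∃ D : Set (ℝ × ℝ), IsPreconnected D ∧ D ⊆ interior (KK B) ∧ osq b ⊆ D ∧ osq d ⊆ D := by
  refine ⟨Set.Ioo (b.1 : ℝ) ((b.1 : ℝ) + 2) ×ˢ Set.Ioo (b.2 : ℝ) ((b.2 : ℝ) + 1),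
    ((convex_Ioo _ _).prod (convex_Ioo _ _)).isPreconnected, ?_, ?_, ?_⟩
  · apply interior_maximal ?_ (isOpen_Ioo.prod isOpen_Ioo)
    rintro w ⟨⟨hw1, hw2⟩, hw3, hw4⟩
    rcases le_or_gt w.1 ((b.1 : ℝ) + 1) with h | h
    · exact mem_KK.mpr ⟨b, hb, mem_sq.mpr ⟨hw1.le, h, hw3.le, hw4.le⟩⟩
    · have e1 : (d.1 : ℝ) = b.1 + 1 := by rw [h2]; push_cast; ring
      have e2 : (d.2 : ℝ) = b.2 := by rw [← h1]
      exact mem_KK.mpr ⟨d, hd, mem_sq.mpr ⟨by rw [e1]; linarith, by rw [e1]; linarith,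
        by rw [e2]; linarith, by rw [e2]; linarith⟩⟩
  · rintro w ⟨⟨hw1, hw2⟩, hw3, hw4⟩
    exact ⟨⟨hw1, by linarith⟩, hw3, hw4⟩
  · rintro w ⟨⟨hw1, hw2⟩, hw3, hw4⟩
    have e1 : (d.1 : ℝ) = b.1 + 1 := by rw [h2]; push_cast; ring
    have e2 : (d.2 : ℝ) = b.2 := by rw [← h1]
    rw [e1] at hw1 hw2; rw [e2] at hw3 hw4
    exact ⟨⟨by linarith, by linarith⟩, hw3, hw4⟩

lemma dominoV {B : Finset (ℕ × ℕ)} {b d : ℕ × ℕ} (hb : b ∈ B) (hd : d ∈ B)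
    (h1 : b.1 = d.1) (h2 : d.2 = b.2 + 1) :
    ∃ D : Set (ℝ × ℝ), IsPreconnected D ∧ D ⊆ interior (KK B) ∧ osq b ⊆ D ∧ osq d ⊆ D := by
  refine ⟨Set.Ioo (b.1 : ℝ) ((b.1 : ℝ) + 1) ×ˢ Set.Ioo (b.2 : ℝ) ((b.2 : ℝ) + 2),
    ((convex_Ioo _ _).prod (convex_Ioo _ _)).isPreconnected, ?_, ?_, ?_⟩
  · apply interior_maximal ?_ (isOpen_Ioo.prod isOpen_Ioo)
    rintro w ⟨⟨hw1, hw2⟩, hw3, hw4⟩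
    rcases le_or_gt w.2 ((b.2 : ℝ) + 1) with h | h
    · exact mem_KK.mpr ⟨b, hb, mem_sq.mpr ⟨hw1.le, hw2.le, hw3.le, h⟩⟩
    · have e1 : (d.1 : ℝ) = b.1 := by rw [← h1]
      have e2 : (d.2 : ℝ) = b.2 + 1 := by rw [h2]; push_cast; ring
      exact mem_KK.mpr ⟨d, hd, mem_sq.mpr ⟨by rw [e1]; linarith, by rw [e1]; linarith,
        by rw [e2]; linarith, by rw [e2]; linarith⟩⟩
  · rintro w ⟨⟨hw1, hw2⟩, hw3, hw4⟩
    exact ⟨⟨hw1, hw2⟩, hw3, by linarith⟩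
  · rintro w ⟨⟨hw1, hw2⟩, hw3, hw4⟩
    have e1 : (d.1 : ℝ) = b.1 := by rw [← h1]
    have e2 : (d.2 : ℝ) = b.2 + 1 := by rw [h2]; push_cast; ring
    rw [e1] at hw1 hw2; rw [e2] at hw3 hw4
    exact ⟨⟨hw1, hw2⟩, by linarith, by linarith⟩

lemma dominoAdj {B : Finset (ℕ × ℕ)} {b d : ℕ × ℕ} (hb : b ∈ B) (hd : d ∈ B)
    (h : gridAdj b d) :
    ∃ D : Set (ℝ × ℝ), IsPreconnected D ∧ D ⊆ interior (KK B) ∧ osq b ⊆ D ∧ osq d ⊆ D := by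
  rcases h with ⟨h1, h2 | h2⟩ | ⟨h1, h2 | h2⟩
  · exact dominoV hb hd h1 h2
  · obtain ⟨D, hD1, hD2, hD3, hD4⟩ := dominoV hd hb h1.symm h2
    exact ⟨D, hD1, hD2, hD4, hD3⟩
  · exact dominoH hb hd h1 h2
  · obtain ⟨D, hD1, hD2, hD3, hD4⟩ := dominoH hd hb h1.symm h2
    exact ⟨D, hD1, hD2, hD4, hD3⟩

lemma chain {B : Finset (ℕ × ℕ)} {p q : ℕ × ℕ} (hp : p ∈ B)
    (h : Relation.ReflTransGen (fun u v => u ∈ B ∧ v ∈ B ∧ gridAdj u v) p q) :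
    ∃ s : Set (ℝ × ℝ), IsPreconnected s ∧ s ⊆ interior (KK B) ∧ osq p ⊆ s ∧ osq q ⊆ s := by
  induction h with
  | refl => exact ⟨osq p, preconn_osq p, osq_subset_int hp, subset_rfl, subset_rfl⟩
  | @tail b c hpb hbc ih =>
      obtain ⟨s, hs1, hs2, hs3, hs4⟩ := ih
      obtain ⟨hbB, hcB, hadj⟩ := hbc
      obtain ⟨D, hD1, hD2, hD3, hD4⟩ := dominoAdj hbB hcB hadj
      exact ⟨s ∪ D, IsPreconnected.union (ctr b) (hs4 (ctr_mem b)) (hD3 (ctr_mem b)) hs1 hD1,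
        Set.union_subset hs2 hD2, hs3.trans Set.subset_union_left,
        hD4.trans Set.subset_union_right⟩

lemma coord_tri {a b : ℕ} {z : ℝ} (h1 : (a : ℝ) ≤ z) (h2 : z ≤ a + 1)
    (h3 : (b : ℝ) ≤ z) (h4 : z ≤ b + 1) : b = a ∨ b = a + 1 ∨ a = b + 1 := by
  have k1 : (b : ℝ) ≤ a + 1 := le_trans h3 h2
  have k2 : (a : ℝ) ≤ b + 1 := le_trans h1 h4
  have k3 : b ≤ a + 1 := by exact_mod_cast k1
  have k4 : a ≤ b + 1 := by exact_mod_cast k2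
  omega

lemma bridge {B : Finset (ℕ × ℕ)} {z : ℝ × ℝ} (hz : z ∈ interior (KK B)) {c d : ℕ × ℕ}
    (hc : c ∈ B) (hd : d ∈ B) (h1 : z ∈ sq c) (h2 : z ∈ sq d) :
    Relation.ReflTransGen (fun u v => u ∈ B ∧ v ∈ B ∧ gridAdj u v) c d := by
  obtain ⟨a1, a2, a3, a4⟩ := mem_sq.mp h1
  obtain ⟨b1, b2, b3, b4⟩ := mem_sq.mp h2
  set e : ℕ × ℕ := (c.1, d.2) with he
  have hze : z ∈ sq e := mem_sq.mpr ⟨a1, a2, b3, b4⟩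
  have heB : e ∈ B := lemA hz hze
  have step1 : Relation.ReflTransGen (fun u v => u ∈ B ∧ v ∈ B ∧ gridAdj u v) c e := by
    rcases coord_tri a3 a4 b3 b4 with h | h | h
    · have : e = c := Prod.ext rfl h
      rw [this]
    · exact Relation.ReflTransGen.single ⟨hc, heB, Or.inl ⟨rfl, Or.inl h⟩⟩
    · exact Relation.ReflTransGen.single ⟨hc, heB, Or.inl ⟨rfl, Or.inr h⟩⟩
  have step2 : Relation.ReflTransGen (fun u v => u ∈ B ∧ v ∈ B ∧ gridAdj u v) e d := by
    rcases coord_tri a1 a2 b1 b2 with h | h | h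
    · have : e = d := Prod.ext h.symm rfl
      rw [this]
    · exact Relation.ReflTransGen.single ⟨heB, hd, Or.inr ⟨rfl, Or.inl h⟩⟩
    · exact Relation.ReflTransGen.single ⟨heB, hd, Or.inr ⟨rfl, Or.inr h⟩⟩
  exact step1.trans step2

end Stmt3

/-- A finite set `B ⊆ [n-1] × [m-1]` of grid cells is grid-connected if and only if
the union of the corresponding closed unit squares `[i,i+1] × [j,j+1]` has connected
interior. -/
theorem stmt_3 (n m : ℕ) (B : Finset (ℕ × ℕ))
    (hsub : ∀ p ∈ B, 1 ≤ p.1 ∧ p.1 ≤ n - 1 ∧ 1 ≤ p.2 ∧ p.2 ≤ m - 1) :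
    gridConnected B ↔
      IsConnected (interior
        (⋃ p ∈ B, Set.Icc (((p.1 : ℝ), (p.2 : ℝ)) : ℝ × ℝ)
          (((p.1 : ℝ) + 1, (p.2 : ℝ) + 1) : ℝ × ℝ))) := by
  have hKK : (⋃ p ∈ B, Set.Icc (((p.1 : ℝ), (p.2 : ℝ)) : ℝ × ℝ)
      (((p.1 : ℝ) + 1, (p.2 : ℝ) + 1) : ℝ × ℝ)) = Stmt3.KK B := rfl
  rw [hKK]
  have hsub' : ∀ p ∈ B, 1 ≤ p.1 ∧ 1 ≤ p.2 := fun p hp =>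
    ⟨(hsub p hp).1, (hsub p hp).2.2.1⟩
  constructor
  · rintro ⟨⟨p0, hp0⟩, hconn⟩
    refine ⟨⟨Stmt3.ctr p0, Stmt3.osq_subset_int hp0 (Stmt3.ctr_mem p0)⟩, ?_⟩
    apply isPreconnected_of_forall_pair
    intro x hx y hy
    obtain ⟨c, hc, tx, htx1, htx2, htx3, htx4⟩ := Stmt3.patch hsub' hx
    obtain ⟨d, hd, ty, hty1, hty2, hty3, hty4⟩ := Stmt3.patch hsub' hy
    obtain ⟨s, hs1, hs2, hs3, hs4⟩ := Stmt3.chain hc (hconn c hc d hd)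
    refine ⟨(tx ∪ s) ∪ ty, ?_, Or.inl (Or.inl htx3), Or.inr hty3, ?_⟩
    · exact Set.union_subset (Set.union_subset htx2 hs2) hty2
    · refine IsPreconnected.union (Stmt3.ctr d) ?_ (hty4 (Stmt3.ctr_mem d)) ?_ hty1
      · exact Or.inr (hs4 (Stmt3.ctr_mem d))
      · exact IsPreconnected.union (Stmt3.ctr c) (htx4 (Stmt3.ctr_mem c))
          (hs3 (Stmt3.ctr_mem c)) htx1 hs1
  · intro h
    refine ⟨?_, ?_⟩
    · obtain ⟨x, hx⟩ := h.nonempty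
      obtain ⟨p, hp, -⟩ := Stmt3.mem_KK.mp (interior_subset hx)
      exact ⟨p, hp⟩
    · intro p hp q hq
      by_contra hpq
      set R := Relation.ReflTransGen (fun u v => u ∈ B ∧ v ∈ B ∧ gridAdj u v) with hR
      set S1 : Set (ℝ × ℝ) := ⋃ c ∈ {c : ℕ × ℕ | c ∈ B ∧ R p c}, Stmt3.sq c with hS1
      set S2 : Set (ℝ × ℝ) := ⋃ c ∈ {c : ℕ × ℕ | c ∈ B ∧ ¬ R p c}, Stmt3.sq c with hS2
      have hfin1 : {c : ℕ × ℕ | c ∈ B ∧ R p c}.Finite :=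
        B.finite_toSet.subset (fun c hc => hc.1)
      have hfin2 : {c : ℕ × ℕ | c ∈ B ∧ ¬ R p c}.Finite :=
        B.finite_toSet.subset (fun c hc => hc.1)
      have hcl1 : IsClosed S1 := hfin1.isClosed_biUnion (fun c _ => isClosed_Icc)
      have hcl2 : IsClosed S2 := hfin2.isClosed_biUnion (fun c _ => isClosed_Icc)
      have hmem1 : ∀ z : ℝ × ℝ, z ∈ S1 ↔ ∃ c, (c ∈ B ∧ R p c) ∧ z ∈ Stmt3.sq c := by
        intro z
        simp only [hS1, Set.mem_iUnion, Set.mem_setOf_eq, exists_prop]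
      have hmem2 : ∀ z : ℝ × ℝ, z ∈ S2 ↔ ∃ c, (c ∈ B ∧ ¬ R p c) ∧ z ∈ Stmt3.sq c := by
        intro z
        simp only [hS2, Set.mem_iUnion, Set.mem_setOf_eq, exists_prop]
      have hcover : interior (Stmt3.KK B) ⊆ S2ᶜ ∪ S1ᶜ := by
        intro z hz
        obtain ⟨c, hc, hzc⟩ := Stmt3.mem_KK.mp (interior_subset hz)
        by_cases hRc : R p c
        · left
          intro hzS2
          obtain ⟨d, ⟨hdB, hdR⟩, hzd⟩ := (hmem2 z).mp hzS2
          exact hdR (hRc.trans (Stmt3.bridge hz hc hdB hzc hzd))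
        · right
          intro hzS1
          obtain ⟨d, ⟨hdB, hdR⟩, hzd⟩ := (hmem1 z).mp hzS1
          exact hRc (hdR.trans (Stmt3.bridge hz hdB hc hzd hzc))
      have h1 : (interior (Stmt3.KK B) ∩ S2ᶜ).Nonempty := by
        refine ⟨Stmt3.ctr p, Stmt3.osq_subset_int hp (Stmt3.ctr_mem p), ?_⟩
        intro hmem
        obtain ⟨d, ⟨hdB, hdR⟩, hzd⟩ := (hmem2 _).mp hmem
        rw [Stmt3.cell_eq (Stmt3.ctr_mem p) hzd] at hdR
        exact hdR Relation.ReflTransGen.refl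
      have h2 : (interior (Stmt3.KK B) ∩ S1ᶜ).Nonempty := by
        refine ⟨Stmt3.ctr q, Stmt3.osq_subset_int hq (Stmt3.ctr_mem q), ?_⟩
        intro hmem
        obtain ⟨d, ⟨hdB, hdR⟩, hzd⟩ := (hmem1 _).mp hmem
        rw [Stmt3.cell_eq (Stmt3.ctr_mem q) hzd] at hdR
        exact hpq hdR
      obtain ⟨z, hzU, hz2, hz1⟩ := h.isPreconnected S2ᶜ S1ᶜ hcl2.isOpen_compl
        hcl1.isOpen_compl hcover h1 h2
      obtain ⟨c, hc, hzc⟩ := Stmt3.mem_KK.mp (interior_subset hzU)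
      by_cases hRc : R p c
      · exact hz1 ((hmem1 z).mpr ⟨c, ⟨hc, hRc⟩, hzc⟩)
      · exact hz2 ((hmem2 z).mpr ⟨c, ⟨hc, hRc⟩, hzc⟩)
end

section
/- Let B ⊆ ℤ² be a finite nonempty set that is grid-starconvex from (i₀,j₀) ∈ B, meaning: for every (i',j') ∈ B and every i'' in the closed interval between i₀ and i', and every j'' in the closed interval between j₀ and j', one has (i'',j'') ∈ B. Then the union of the closed unit squares [i,i+1]×[j,j+1] over (i,j) ∈ B is star-shaped from any point in the open square (i₀,i₀+1)×(j₀,j₀+1). -/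
/-- Clamping lemma: a real `z` with `a ≤ z ≤ b+1` lies in some unit interval
`[c, c+1]` with `a ≤ c ≤ b`. -/
lemma clamp_aux (a b : ℤ) (z : ℝ) (hab : a ≤ b) (h1 : (a : ℝ) ≤ z) (h2 : z ≤ (b : ℝ) + 1) :
    ∃ c : ℤ, a ≤ c ∧ c ≤ b ∧ (c : ℝ) ≤ z ∧ z ≤ (c : ℝ) + 1 := by
  refine ⟨max a (min ⌊z⌋ b), le_max_left _ _, ?_, ?_, ?_⟩
  · exact max_le hab (min_le_right _ _)
  · rcases max_cases a (min ⌊z⌋ b) with ⟨h, _⟩ | ⟨h, _⟩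
    · rw [h]; exact h1
    · rw [h]
      calc ((min ⌊z⌋ b : ℤ) : ℝ) ≤ (⌊z⌋ : ℝ) := by exact_mod_cast min_le_left _ _
        _ ≤ z := Int.floor_le z
  · rcases le_or_gt ⌊z⌋ b with hb | hb
    · rcases le_or_gt a ⌊z⌋ with ha | ha
      · rw [min_eq_left hb, max_eq_right ha]
        exact le_of_lt (Int.lt_floor_add_one z)
      · have : max a (min ⌊z⌋ b) = a := max_eq_left (le_of_lt (lt_of_le_of_lt (min_le_left _ _) ha))
        rw [this]
        have : z < (⌊z⌋ : ℝ) + 1 := Int.lt_floor_add_one z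
        have h3 : (⌊z⌋ : ℝ) + 1 ≤ (a : ℝ) := by exact_mod_cast ha
        linarith
    · have : min ⌊z⌋ b = b := min_eq_right (le_of_lt hb)
      rw [this, max_eq_right hab]
      exact h2

/-- If `B ⊆ ℤ²` is finite, nonempty and grid-starconvex from `(i₀, j₀) ∈ B`, then the
union of the closed unit squares `[i,i+1] × [j,j+1]` over `(i,j) ∈ B` is star-shaped
from any point of the open square `(i₀, i₀+1) × (j₀, j₀+1)`. -/
theorem stmt_4 (B : Finset (ℤ × ℤ)) (hne : B.Nonempty) (i₀ j₀ : ℤ) (h₀ : (i₀, j₀) ∈ B)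
    (hstar : ∀ p ∈ B, ∀ i'' j'' : ℤ,
      min i₀ p.1 ≤ i'' → i'' ≤ max i₀ p.1 → min j₀ p.2 ≤ j'' → j'' ≤ max j₀ p.2 →
      (i'', j'') ∈ B) :
    ∀ x : ℝ × ℝ, (i₀ : ℝ) < x.1 → x.1 < (i₀ : ℝ) + 1 → (j₀ : ℝ) < x.2 → x.2 < (j₀ : ℝ) + 1 →
      StarConvex ℝ x
        (⋃ p ∈ B, Set.Icc (((p.1 : ℝ), (p.2 : ℝ)) : ℝ × ℝ)
          (((p.1 : ℝ) + 1, (p.2 : ℝ) + 1) : ℝ × ℝ)) := by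
  intro x hx1 hx2 hx3 hx4
  intro y hy a b ha hb hab
  simp only [Set.mem_iUnion] at hy ⊢
  obtain ⟨⟨i, j⟩, hpB, hy⟩ := hy
  rw [Set.mem_Icc] at hy
  obtain ⟨⟨hy1, hy2⟩, ⟨hy3, hy4⟩⟩ := hy
  simp only [Prod.fst, Prod.snd] at *
  set z : ℝ × ℝ := a • x + b • y with hz
  have hz1 : z.1 = a * x.1 + b * y.1 := rfl
  have hz2 : z.2 = a * x.2 + b * y.2 := rfl
  -- bounds on z.1
  have hmin1 : ((min i₀ i : ℤ) : ℝ) ≤ z.1 := by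
    have h1 : ((min i₀ i : ℤ) : ℝ) ≤ (i₀ : ℝ) := by exact_mod_cast min_le_left _ _
    have h2 : ((min i₀ i : ℤ) : ℝ) ≤ (i : ℝ) := by exact_mod_cast min_le_right _ _
    have hxm : ((min i₀ i : ℤ) : ℝ) ≤ x.1 := le_trans h1 hx1.le
    have hym : ((min i₀ i : ℤ) : ℝ) ≤ y.1 := le_trans h2 hy1
    rw [hz1]
    have hid : a * (((min i₀ i : ℤ) : ℝ)) + b * (((min i₀ i : ℤ) : ℝ)) = ((min i₀ i : ℤ) : ℝ) := by
      rw [← add_mul, hab, one_mul]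
    linarith [mul_le_mul_of_nonneg_left hxm ha, mul_le_mul_of_nonneg_left hym hb]
  have hmax1 : z.1 ≤ ((max i₀ i : ℤ) : ℝ) + 1 := by
    have h1 : (i₀ : ℝ) ≤ ((max i₀ i : ℤ) : ℝ) := by exact_mod_cast le_max_left _ _
    have h2 : (i : ℝ) ≤ ((max i₀ i : ℤ) : ℝ) := by exact_mod_cast le_max_right _ _
    have hxm : x.1 ≤ ((max i₀ i : ℤ) : ℝ) + 1 := by linarith
    have hym : y.1 ≤ ((max i₀ i : ℤ) : ℝ) + 1 := by linarith
    rw [hz1]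
    have hid : a * (((max i₀ i : ℤ) : ℝ) + 1) + b * (((max i₀ i : ℤ) : ℝ) + 1) = ((max i₀ i : ℤ) : ℝ) + 1 := by
      rw [← add_mul, hab, one_mul]
    linarith [mul_le_mul_of_nonneg_left hxm ha, mul_le_mul_of_nonneg_left hym hb]
  have hmin2 : ((min j₀ j : ℤ) : ℝ) ≤ z.2 := by
    have h1 : ((min j₀ j : ℤ) : ℝ) ≤ (j₀ : ℝ) := by exact_mod_cast min_le_left _ _
    have h2 : ((min j₀ j : ℤ) : ℝ) ≤ (j : ℝ) := by exact_mod_cast min_le_right _ _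
    have hxm : ((min j₀ j : ℤ) : ℝ) ≤ x.2 := le_trans h1 hx3.le
    have hym : ((min j₀ j : ℤ) : ℝ) ≤ y.2 := le_trans h2 hy2
    rw [hz2]
    have hid : a * (((min j₀ j : ℤ) : ℝ)) + b * (((min j₀ j : ℤ) : ℝ)) = ((min j₀ j : ℤ) : ℝ) := by
      rw [← add_mul, hab, one_mul]
    linarith [mul_le_mul_of_nonneg_left hxm ha, mul_le_mul_of_nonneg_left hym hb]
  have hmax2 : z.2 ≤ ((max j₀ j : ℤ) : ℝ) + 1 := by
    have h1 : (j₀ : ℝ) ≤ ((max j₀ j : ℤ) : ℝ) := by exact_mod_cast le_max_left _ _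
    have h2 : (j : ℝ) ≤ ((max j₀ j : ℤ) : ℝ) := by exact_mod_cast le_max_right _ _
    have hxm : x.2 ≤ ((max j₀ j : ℤ) : ℝ) + 1 := by linarith
    have hym : y.2 ≤ ((max j₀ j : ℤ) : ℝ) + 1 := by linarith
    rw [hz2]
    have hid : a * (((max j₀ j : ℤ) : ℝ) + 1) + b * (((max j₀ j : ℤ) : ℝ) + 1) = ((max j₀ j : ℤ) : ℝ) + 1 := by
      rw [← add_mul, hab, one_mul]
    linarith [mul_le_mul_of_nonneg_left hxm ha, mul_le_mul_of_nonneg_left hym hb]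
  obtain ⟨c, hc1, hc2, hc3, hc4⟩ := clamp_aux (min i₀ i) (max i₀ i) z.1 (min_le_max) hmin1 hmax1
  obtain ⟨d, hd1, hd2, hd3, hd4⟩ := clamp_aux (min j₀ j) (max j₀ j) z.2 (min_le_max) hmin2 hmax2
  refine ⟨(c, d), hstar (i, j) hpB c d hc1 hc2 hd1 hd2, ?_⟩
  rw [Set.mem_Icc]
  exact ⟨⟨hc3, hd3⟩, ⟨hc4, hd4⟩⟩
end

section
/- Let B ⊆ [n-1] × [m-1] be grid-unimodal, meaning B is grid-connected and for every i, the set {j : (i,j) ∈ B} is an interval of integers, and for every j, the set {i : (i,j) ∈ B} is an interval of integers. If |B| > 1, then there exists (i₀,j₀) ∈ B such that B \ {(i₀,j₀)} is again grid-unimodal and (i₀,j₀) has at least one grid-neighbor in B \ {(i₀,j₀)}. -/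
/-- All row sections and all column sections of `B` are intervals of integers. -/
def sectionsAreIntervals (B : Finset (ℕ × ℕ)) : Prop :=
  (∀ i j₁ j₂ j₃ : ℕ, j₁ ≤ j₂ → j₂ ≤ j₃ → (i, j₁) ∈ B → (i, j₃) ∈ B → (i, j₂) ∈ B) ∧
    (∀ j i₁ i₂ i₃ : ℕ, i₁ ≤ i₂ → i₂ ≤ i₃ → (i₁, j) ∈ B → (i₃, j) ∈ B → (i₂, j) ∈ B)

/-- `B` is grid-unimodal: grid-connected with all row and column sections intervals. -/
def gridUnimodal (B : Finset (ℕ × ℕ)) : Prop :=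
  gridConnected B ∧ sectionsAreIntervals B

/-!
Let `c` be the rightmost column of `B` and `(s, c)`, `(t, c)` its top and bottom cells. Each is
an endpoint of both its row and its column section, so erasing it keeps all sections
intervals, and the remainder stays connected as soon as the (at most two) neighbours of the
erased cell remain linked, which holds when the diagonal cell completing the corner is in `B`.
If this failed at both cells, column `c - 1` would contain `(s, c - 1)` and `(t, c - 1)` but
miss the cell `(s + 1, c - 1)` between them, contradicting that it is an interval.
-/

section Reachability

variable {α : Type*}

def ReachableIn (r : α → α → Prop) (B : Finset α) : α → α → Prop :=
  Relation.ReflTransGen fun u v => u ∈ B ∧ v ∈ B ∧ r u v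

theorem ReachableIn.erase [DecidableEq α] {r : α → α → Prop} (hr : ∀ ⦃a b⦄, r a b → r b a)
    {B : Finset α} {p u v : α} (huv : ReachableIn r B u v) (hu : u ∈ B.erase p)
    (hv : v ∈ B.erase p)
    (hlink : ∀ y ∈ B.erase p, ∀ z ∈ B.erase p, r p y → r p z →
      ReachableIn r (B.erase p) y z) :
    ReachableIn r (B.erase p) u v := by
  suffices ∀ w, ReachableIn r B u w → (w ≠ p → ReachableIn r (B.erase p) u w) ∧
      (w = p → ∀ y ∈ B.erase p, r p y → ReachableIn r (B.erase p) u y) from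
    (this v huv).1 (Finset.ne_of_mem_erase hv)
  intro w huw
  induction huw with
  | refl => exact ⟨fun _ => .refl, fun h => absurd h (Finset.ne_of_mem_erase hu)⟩
  | @tail w x _ hwx ih =>
    obtain ⟨hw, hx, hwx⟩ := hwx
    by_cases hwp : w = p
    · subst hwp
      exact ⟨fun hxp => ih.2 rfl x (Finset.mem_erase.2 ⟨hxp, hx⟩) hwx,
        fun _ => ih.2 rfl⟩
    · have hw' : w ∈ B.erase p := Finset.mem_erase.2 ⟨hwp, hw⟩
      refine ⟨fun hxp => (ih.1 hwp).tail ⟨hw', Finset.mem_erase.2 ⟨hxp, hx⟩, hwx⟩, ?_⟩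
      rintro rfl y hy hxy
      exact (ih.1 hwp).trans (hlink w hw' y hy (hr hwx) hxy)

theorem ReachableIn.symm {r : α → α → Prop} (hr : ∀ ⦃a b⦄, r a b → r b a) {B : Finset α}
    {u v : α} (huv : ReachableIn r B u v) : ReachableIn r B v u := by
  induction huv with
  | refl => exact .refl
  | tail _ hwx ih => exact ih.head ⟨hwx.2.1, hwx.1, hr hwx.2.2⟩

end Reachability

theorem gridAdj_symm {u v : ℕ × ℕ} (h : gridAdj u v) : gridAdj v u := by
  simp only [gridAdj] at h ⊢
  omega

theorem gridAdj_irrefl (u : ℕ × ℕ) : ¬ gridAdj u u := by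
  simp only [gridAdj]
  omega

def NeighborsLinked (B : Finset (ℕ × ℕ)) (p : ℕ × ℕ) : Prop :=
  ∀ y ∈ B.erase p, ∀ z ∈ B.erase p, gridAdj p y → gridAdj p z →
    ReachableIn gridAdj (B.erase p) y z

def IsRowEndpoint (B : Finset (ℕ × ℕ)) (p : ℕ × ℕ) : Prop :=
  (∀ j, (p.1, j) ∈ B → j ≤ p.2) ∨ (∀ j, (p.1, j) ∈ B → p.2 ≤ j)

def IsColEndpoint (B : Finset (ℕ × ℕ)) (p : ℕ × ℕ) : Prop :=
  (∀ i, (i, p.2) ∈ B → i ≤ p.1) ∨ (∀ i, (i, p.2) ∈ B → p.1 ≤ i)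

section Erase

variable {B : Finset (ℕ × ℕ)} {p : ℕ × ℕ}

theorem gridConnected_erase (hB : gridConnected B) (hne : (B.erase p).Nonempty)
    (hlink : NeighborsLinked B p) : gridConnected (B.erase p) :=
  ⟨hne, fun _ hu _ hv => ReachableIn.erase (fun _ _ => gridAdj_symm)
    (hB.2 _ (Finset.mem_of_mem_erase hu) _ (Finset.mem_of_mem_erase hv)) hu hv hlink⟩

theorem sectionsAreIntervals_erase (hB : sectionsAreIntervals B) (hrow : IsRowEndpoint B p)
    (hcol : IsColEndpoint B p) : sectionsAreIntervals (B.erase p) := by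
  obtain ⟨hr, hc⟩ := hB
  refine ⟨fun i j₁ j₂ j₃ h₁₂ h₂₃ h₁ h₃ => ?_, fun j i₁ i₂ i₃ h₁₂ h₂₃ h₁ h₃ => ?_⟩
  · refine Finset.mem_erase.2 ⟨?_, hr i j₁ j₂ j₃ h₁₂ h₂₃
      (Finset.mem_of_mem_erase h₁) (Finset.mem_of_mem_erase h₃)⟩
    rintro rfl
    rcases hrow with h | h
    · obtain rfl := le_antisymm h₂₃ (h j₃ (Finset.mem_of_mem_erase h₃))
      exact Finset.ne_of_mem_erase h₃ rfl
    · obtain rfl := le_antisymm h₁₂ (h j₁ (Finset.mem_of_mem_erase h₁))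
      exact Finset.ne_of_mem_erase h₁ rfl
  · refine Finset.mem_erase.2 ⟨?_, hc j i₁ i₂ i₃ h₁₂ h₂₃
      (Finset.mem_of_mem_erase h₁) (Finset.mem_of_mem_erase h₃)⟩
    rintro rfl
    rcases hcol with h | h
    · obtain rfl := le_antisymm h₂₃ (h i₃ (Finset.mem_of_mem_erase h₃))
      exact Finset.ne_of_mem_erase h₃ rfl
    · obtain rfl := le_antisymm h₁₂ (h i₁ (Finset.mem_of_mem_erase h₁))
      exact Finset.ne_of_mem_erase h₁ rfl

theorem gridUnimodal_erase (hB : gridUnimodal B) (hrow : IsRowEndpoint B p)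
    (hcol : IsColEndpoint B p) (hlink : NeighborsLinked B p) (hne : (B.erase p).Nonempty) :
    gridUnimodal (B.erase p) :=
  ⟨gridConnected_erase hB.1 hne hlink, sectionsAreIntervals_erase hB.2 hrow hcol⟩

theorem exists_gridAdj_of_one_lt_card (hB : gridConnected B) (hp : p ∈ B)
    (hcard : 1 < B.card) : ∃ q ∈ B.erase p, gridAdj p q := by
  obtain ⟨z, hz, hzp⟩ := Finset.exists_mem_ne hcard p
  rcases (hB.2 p hp z hz).cases_head with rfl | ⟨q, ⟨-, hq, hpq⟩, -⟩
  · exact absurd rfl hzp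
  · exact ⟨q, Finset.mem_erase.2 ⟨fun h => gridAdj_irrefl p (h ▸ hpq), hq⟩, hpq⟩

theorem reachableIn_erase_of_diagonal {p₁ p₂ i j : ℕ} (hh : (p₁, j) ∈ B.erase (p₁, p₂))
    (hv : (i, p₂) ∈ B.erase (p₁, p₂)) (hph : gridAdj (p₁, p₂) (p₁, j))
    (hpv : gridAdj (p₁, p₂) (i, p₂)) (hd : (i, j) ∈ B) :
    ReachableIn gridAdj (B.erase (p₁, p₂)) (p₁, j) (i, p₂) := by
  unfold gridAdj at hph hpv
  have hd' : (i, j) ∈ B.erase (p₁, p₂) := Finset.mem_erase.2 ⟨by grind, hd⟩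
  exact .head ⟨hh, hd', by unfold gridAdj; omega⟩ (.single ⟨hd', hv, by unfold gridAdj; omega⟩)

theorem exists_missing_diagonal (hrow : IsRowEndpoint B p) (hcol : IsColEndpoint B p)
    (h : ¬ NeighborsLinked B p) :
    ∃ i j, (p.1, j) ∈ B ∧ (i, p.2) ∈ B ∧ gridAdj p (p.1, j) ∧ gridAdj p (i, p.2) ∧
      (i, j) ∉ B := by
  obtain ⟨p₁, p₂⟩ := p
  simp only [NeighborsLinked, not_forall] at h
  obtain ⟨⟨y₁, y₂⟩, hy, ⟨z₁, z₂⟩, hz, hpy, hpz, hyz⟩ := h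
  have hne : ¬(y₁ = z₁ ∧ y₂ = z₂) := by
    rintro ⟨rfl, rfl⟩
    exact hyz .refl
  have hy' := Finset.mem_of_mem_erase hy
  have hz' := Finset.mem_of_mem_erase hz
  have hy_dir : y₁ = p₁ ∨ y₂ = p₂ := by unfold gridAdj at hpy; omega
  have hz_dir : z₁ = p₁ ∨ z₂ = p₂ := by unfold gridAdj at hpz; omega
  rcases hy_dir with rfl | rfl <;> rcases hz_dir with rfl | rfl
  · unfold gridAdj at hpy hpz
    rcases hrow with h | h <;> have := h _ hy' <;> have := h _ hz' <;> omega
  · exact ⟨z₁, y₂, hy', hz', hpy, hpz,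
      fun hd => hyz (reachableIn_erase_of_diagonal hy hz hpy hpz hd)⟩
  · exact ⟨y₁, z₂, hz', hy', hpz, hpy,
      fun hd => hyz ((reachableIn_erase_of_diagonal hz hy hpz hpy hd).symm
        fun _ _ => gridAdj_symm)⟩
  · unfold gridAdj at hpy hpz
    rcases hcol with h | h <;> have := h _ hy' <;> have := h _ hz' <;> omega

end Erase

theorem exists_column_ends {B : Finset (ℕ × ℕ)} (hB : B.Nonempty) :
    ∃ c s t, (s, c) ∈ B ∧ (t, c) ∈ B ∧ (∀ x ∈ B, x.2 ≤ c) ∧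
      ∀ i, (i, c) ∈ B → s ≤ i ∧ i ≤ t := by
  obtain ⟨⟨i, c⟩, hic, hc⟩ := B.exists_max_image Prod.snd hB
  have hcol : (B.filter (·.2 = c)).Nonempty := ⟨(i, c), Finset.mem_filter.2 ⟨hic, rfl⟩⟩
  obtain ⟨⟨s, c'⟩, hs, hsmin⟩ := (B.filter (·.2 = c)).exists_min_image Prod.fst hcol
  obtain ⟨⟨t, c''⟩, ht, htmax⟩ := (B.filter (·.2 = c)).exists_max_image Prod.fst hcol
  rw [Finset.mem_filter] at hs ht
  obtain ⟨hs, rfl⟩ := hs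
  obtain ⟨ht, rfl⟩ := ht
  refine ⟨_, s, t, hs, ht, hc, fun i hi => ⟨?_, ?_⟩⟩
  · exact hsmin (i, _) (Finset.mem_filter.2 ⟨hi, rfl⟩)
  · exact htmax (i, _) (Finset.mem_filter.2 ⟨hi, rfl⟩)

theorem neighborsLinked_top_or_bottom {B : Finset (ℕ × ℕ)} (hB : sectionsAreIntervals B)
    {c s t : ℕ} (hc : ∀ x ∈ B, x.2 ≤ c) (hst : ∀ i, (i, c) ∈ B → s ≤ i ∧ i ≤ t) :
    NeighborsLinked B (s, c) ∨ NeighborsLinked B (t, c) := by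
  have hrow : ∀ i, IsRowEndpoint B (i, c) := fun i => Or.inl fun j hj => hc _ hj
  by_contra! h
  obtain ⟨i, j, hsj, hic, hsadj, -, hij⟩ :=
    exists_missing_diagonal (hrow s) (Or.inr fun i hi => (hst i hi).1) h.1
  obtain ⟨-, j', htj, -, htadj, -, -⟩ :=
    exists_missing_diagonal (hrow t) (Or.inl fun i hi => (hst i hi).2) h.2
  obtain rfl : j = j' := by
    have := hc _ hsj
    have := hc _ htj
    unfold gridAdj at hsadj htadj
    omega
  exact hij (hB.2 j s i t (hst i hic).1 (hst i hic).2 hsj htj)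

theorem stmt_5_general (B : Finset (ℕ × ℕ)) (hB : gridUnimodal B) (hcard : 1 < B.card) :
    ∃ p ∈ B, gridUnimodal (B.erase p) ∧ ∃ q ∈ B.erase p, gridAdj p q := by
  have of_linked_corner : ∀ p ∈ B, IsRowEndpoint B p → IsColEndpoint B p → NeighborsLinked B p →
      ∃ p ∈ B, gridUnimodal (B.erase p) ∧ ∃ q ∈ B.erase p, gridAdj p q := by
    intro p hp hrow hcol hlink
    obtain ⟨q, hq, hpq⟩ := exists_gridAdj_of_one_lt_card hB.1 hp hcard
    exact ⟨p, hp, gridUnimodal_erase hB hrow hcol hlink ⟨q, hq⟩, q, hq, hpq⟩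
  obtain ⟨c, s, t, hs, ht, hc, hst⟩ := exists_column_ends hB.1.1
  have hrow : ∀ i, IsRowEndpoint B (i, c) := fun i => Or.inl fun j hj => hc _ hj
  rcases neighborsLinked_top_or_bottom hB.2 hc hst with h | h
  · exact of_linked_corner _ hs (hrow s) (Or.inr fun i hi => (hst i hi).1) h
  · exact of_linked_corner _ ht (hrow t) (Or.inl fun i hi => (hst i hi).2) h

/-- If `B ⊆ [n-1] × [m-1]` is grid-unimodal with more than one element, then some cell
can be removed so that the remainder is still grid-unimodal, and the removed cell has a
grid-neighbor in the remainder. -/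
theorem stmt_5 (n m : ℕ) (B : Finset (ℕ × ℕ))
    (hsub : ∀ p ∈ B, 1 ≤ p.1 ∧ p.1 ≤ n - 1 ∧ 1 ≤ p.2 ∧ p.2 ≤ m - 1)
    (hB : gridUnimodal B) (hcard : 1 < B.card) :
    ∃ p ∈ B, gridUnimodal (B.erase p) ∧ ∃ q ∈ B.erase p, gridAdj p q :=
  stmt_5_general B hB hcard
end

section
/- Let d ≥ 1, n₁,...,n_d ≥ 2, and m₁, m₂ integers with d ≤ m₁ ≤ m₂ ≤ -d + Σ n_i. Define B(d,m₁,m₂) = {(i₁,...,i_d) ∈ [n₁-1]×...×[n_d-1] : m₁ ≤ i₁+...+i_d ≤ m₂}. If m₂ - m₁ ≥ d, or m₁ = d, or m₂ = Σn_i - d, then B(d,m₁,m₂) is grid-connected: between any two of its elements there is a path in B changing one coordinate at a time by one unit. -/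
/-!
Since `m₁ ≥ d`, a point of the slab above the bottom level `m₁` has a coordinate `≥ 2`, and
lowering it is a step inside the slab; so every point is joined to a point of level `m₁`. When
`m₁ < m₂`, two distinct points `x, y` of level `m₁` are joined by going up to level `m₁ + 1`,
raising a coordinate where `x` lies below `y`, and coming back down by lowering a coordinate where
`x` lies above `y`; this strictly shrinks `∑ᵢ (yᵢ - xᵢ)`. When `m₁ = m₂`, the slab is a single point:
the empty tuple (`d = 0`), the all-ones tuple (`m₁ = d`) or `(nᵢ - 1)ᵢ` (`m₁ = ∑ nᵢ - d`).
-/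

/-- Grid adjacency in `ℤ^d`-like grids: two tuples are adjacent iff they differ in
exactly one coordinate, by exactly one unit. -/
def gridAdjTuple {d : ℕ} (a b : Fin d → ℕ) : Prop :=
  ∃ i, (b i = a i + 1 ∨ a i = b i + 1) ∧ ∀ j, j ≠ i → a j = b j

open Finset Function Relation

section Sums

variable {ι M : Type*} [Fintype ι]

lemma sum_update_add [AddCommMonoid M] [DecidableEq ι] (x : ι → M) (i : ι) (v : M) :
    ∑ j, update x i v j + x i = ∑ j, x j + v := by
  rw [sum_update_of_mem (mem_univ i), ← add_sum_erase _ x (mem_univ i), sdiff_singleton_eq_erase]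
  abel

lemma eq_of_le_of_sum_le [AddCommMonoid M] [PartialOrder M] [IsOrderedCancelAddMonoid M]
    {f g : ι → M} (hfg : f ≤ g) (hsum : ∑ i, g i ≤ ∑ i, f i) : f = g :=
  funext fun i => (sum_eq_sum_iff_of_le fun i _ => hfg i).1
    (le_antisymm (sum_le_sum fun i _ => hfg i) hsum) i (mem_univ i)

lemma exists_lt_of_sum_eq_of_ne {f g : ι → ℕ} (hsum : ∑ i, f i = ∑ i, g i) (hne : f ≠ g) :
    ∃ i, f i < g i := by
  by_contra! hgf
  exact hne (eq_of_le_of_sum_le hgf hsum.le).symm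

end Sums

section Grid

variable {d : ℕ}

lemma gridAdjTuple_symm {a b : Fin d → ℕ} (h : gridAdjTuple a b) : gridAdjTuple b a :=
  let ⟨i, hi, heq⟩ := h
  ⟨i, hi.symm, fun j hj => (heq j hj).symm⟩

lemma gridAdjTuple_update {x : Fin d → ℕ} {i : Fin d} {v : ℕ} (h : v = x i + 1 ∨ x i = v + 1) :
    gridAdjTuple x (update x i v) :=
  ⟨i, by simpa using h, fun _ hj => (update_of_ne hj _ _).symm⟩

def slab (n : Fin d → ℕ) (m₁ m₂ : ℕ) : Set (Fin d → ℕ) :=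
  {x | (∀ i, 1 ≤ x i ∧ x i ≤ n i - 1) ∧ m₁ ≤ ∑ i, x i ∧ ∑ i, x i ≤ m₂}

def gridStep (S : Set (Fin d → ℕ)) (a b : Fin d → ℕ) : Prop :=
  a ∈ S ∧ b ∈ S ∧ gridAdjTuple a b

instance (S : Set (Fin d → ℕ)) : Std.Symm (gridStep S) where
  symm _ _ h := ⟨h.2.1, h.1, gridAdjTuple_symm h.2.2⟩

lemma gridStep_update {S : Set (Fin d → ℕ)} {x : Fin d → ℕ} {i : Fin d} {v : ℕ}
    (hx : x ∈ S) (hv : update x i v ∈ S) (h : v = x i + 1 ∨ x i = v + 1) :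
    gridStep S x (update x i v) :=
  ⟨hx, hv, gridAdjTuple_update h⟩

variable {n : Fin d → ℕ} {m₁ m₂ : ℕ} {x y : Fin d → ℕ}

lemma update_mem_slab {i : Fin d} {v : ℕ} (hx : x ∈ slab n m₁ m₂) (hv : 1 ≤ v ∧ v ≤ n i - 1)
    (hsum : m₁ ≤ ∑ j, update x i v j ∧ ∑ j, update x i v j ≤ m₂) :
    update x i v ∈ slab n m₁ m₂ := by
  refine ⟨fun j => ?_, hsum⟩
  rcases eq_or_ne j i with rfl | hj
  · simpa using hv
  · simpa [hj] using hx.1 j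

lemma eq_one_of_mem_slab (hx : x ∈ slab n m₁ m₂) (h : m₂ ≤ d) : x = 1 :=
  (eq_of_le_of_sum_le (fun i => (hx.1 i).1) (by simpa using hx.2.2.trans h)).symm

lemma eq_sub_one_of_mem_slab (hx : x ∈ slab n m₁ m₂) (h : ∑ i, n i - d ≤ m₁) :
    x = fun i => n i - 1 := by
  have hsum : ∑ i, (n i - 1) = ∑ i, n i - d := by
    rw [sum_tsub_distrib _ fun i _ => by have := hx.1 i; omega]
    simp
  exact eq_of_le_of_sum_le (fun i => (hx.1 i).2) (hsum ▸ h.trans hx.2.1)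

lemma exists_gridStep_sum_lt (h1 : d ≤ m₁) (hx : x ∈ slab n m₁ m₂) (hlt : m₁ < ∑ i, x i) :
    ∃ z, gridStep (slab n m₁ m₂) x z ∧ ∑ i, z i < ∑ i, x i := by
  obtain ⟨i, hi⟩ : ∃ i, 2 ≤ x i := by
    by_contra! hx1
    have : ∑ i, x i ≤ ∑ _i : Fin d, 1 := sum_le_sum fun i _ => by have := hx1 i; omega
    simp only [sum_const, card_univ, Fintype.card_fin, smul_eq_mul, mul_one] at this
    omega
  have hsum := sum_update_add x i (x i - 1)
  have hbox := hx.1 i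
  have hlevel : ∑ i, x i ≤ m₂ := hx.2.2
  have hz := update_mem_slab (i := i) (v := x i - 1) hx (by omega) (by omega)
  exact ⟨_, gridStep_update hx hz (by omega), by omega⟩

lemma exists_reflTransGen_sum_eq_bottom (h1 : d ≤ m₁) (hx : x ∈ slab n m₁ m₂) :
    ∃ z ∈ slab n m₁ m₂, ∑ i, z i = m₁ ∧ ReflTransGen (gridStep (slab n m₁ m₂)) x z := by
  induction hk : ∑ i, x i using Nat.strong_induction_on generalizing x with
  | _ k ih =>
  rcases hx.2.1.eq_or_lt with hbot | hlt
  · exact ⟨x, hx, hbot.symm, .refl⟩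
  · obtain ⟨z, hxz, hz⟩ := exists_gridStep_sum_lt h1 hx hlt
    obtain ⟨w, hw, hws, hzw⟩ := ih _ (hk ▸ hz) hxz.2.1 rfl
    exact ⟨w, hw, hws, .head hxz hzw⟩

lemma exists_reflTransGen_closer (hlt : m₁ < m₂) (hx : x ∈ slab n m₁ m₂) (hy : y ∈ slab n m₁ m₂)
    (hxs : ∑ i, x i = m₁) (hys : ∑ i, y i = m₁) (hne : x ≠ y) :
    ∃ z ∈ slab n m₁ m₂, ∑ i, z i = m₁ ∧ ReflTransGen (gridStep (slab n m₁ m₂)) x z ∧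
      ∑ i, (y i - z i) < ∑ i, (y i - x i) := by
  obtain ⟨i, hi⟩ := exists_lt_of_sum_eq_of_ne (hxs.trans hys.symm) hne
  obtain ⟨j, hj⟩ := exists_lt_of_sum_eq_of_ne (hys.trans hxs.symm) hne.symm
  have hij : j ≠ i := by rintro rfl; omega
  have hxi := hx.1 i
  have hxj := hx.1 j
  have hyi := hy.1 i
  have hz₁j : update x i (x i + 1) j = x j := update_of_ne hij _ _
  have hsum₁ := sum_update_add x i (x i + 1)
  have hz₁ := update_mem_slab (i := i) (v := x i + 1) hx (by omega) (by omega)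
  have hsum := sum_update_add (update x i (x i + 1)) j (x j - 1)
  rw [hz₁j] at hsum
  have hz := update_mem_slab (i := j) (v := x j - 1) hz₁ (by have := hy.1 j; omega) (by omega)
  refine ⟨_, hz, by omega, .tail (.single (gridStep_update hx hz₁ (by omega)))
    (gridStep_update hz₁ hz (by omega)), sum_lt_sum (fun k _ => ?_) ⟨i, mem_univ i, ?_⟩⟩
  · rcases eq_or_ne k j with rfl | hkj
    · simp only [update_self]
      omega
    · rcases eq_or_ne k i with rfl | hki
      · simp only [update_of_ne hkj, update_self]
        omega
      · simp [hkj, hki]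
  · simp only [update_of_ne hij.symm, update_self]
    omega

lemma reflTransGen_of_sum_eq_bottom (hlt : m₁ < m₂) (hx : x ∈ slab n m₁ m₂)
    (hy : y ∈ slab n m₁ m₂) (hxs : ∑ i, x i = m₁) (hys : ∑ i, y i = m₁) :
    ReflTransGen (gridStep (slab n m₁ m₂)) x y := by
  induction hk : ∑ i, (y i - x i) using Nat.strong_induction_on generalizing x with
  | _ k ih =>
  rcases eq_or_ne x y with rfl | hne
  · exact .refl
  · obtain ⟨z, hz, hzs, hxz, hlt⟩ := exists_reflTransGen_closer hlt hx hy hxs hys hne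
    exact hxz.trans (ih _ (hk ▸ hlt) hz hzs rfl)

end Grid

theorem stmt_13_general (d : ℕ) (n : Fin d → ℕ)
    (m₁ m₂ : ℕ) (h1 : d ≤ m₁) (h12 : m₁ ≤ m₂)
    (hcase : d ≤ m₂ - m₁ ∨ m₁ = d ∨ m₂ = (∑ i, n i) - d) :
    ∀ x y : Fin d → ℕ,
      ((∀ i, 1 ≤ x i ∧ x i ≤ n i - 1) ∧ m₁ ≤ ∑ i, x i ∧ ∑ i, x i ≤ m₂) →
      ((∀ i, 1 ≤ y i ∧ y i ≤ n i - 1) ∧ m₁ ≤ ∑ i, y i ∧ ∑ i, y i ≤ m₂) →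
      Relation.ReflTransGen
        (fun a b =>
          ((∀ i, 1 ≤ a i ∧ a i ≤ n i - 1) ∧ m₁ ≤ ∑ i, a i ∧ ∑ i, a i ≤ m₂) ∧
          ((∀ i, 1 ≤ b i ∧ b i ≤ n i - 1) ∧ m₁ ≤ ∑ i, b i ∧ ∑ i, b i ≤ m₂) ∧
          gridAdjTuple a b)
        x y := by
  intro x y (hx : x ∈ slab n m₁ m₂) (hy : y ∈ slab n m₁ m₂)
  change ReflTransGen (gridStep (slab n m₁ m₂)) x y
  rcases h12.eq_or_lt with rfl | hlt
  · obtain rfl : x = y := by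
      rcases hcase with hd | rfl | rfl
      · obtain rfl : d = 0 := by omega
        exact Subsingleton.elim x y
      · rw [eq_one_of_mem_slab hx le_rfl, eq_one_of_mem_slab hy le_rfl]
      · rw [eq_sub_one_of_mem_slab hx le_rfl, eq_sub_one_of_mem_slab hy le_rfl]
    exact .refl
  · obtain ⟨x', hx', hx's, hxx'⟩ := exists_reflTransGen_sum_eq_bottom h1 hx
    obtain ⟨y', hy', hy's, hyy'⟩ := exists_reflTransGen_sum_eq_bottom h1 hy
    exact hxx'.trans ((reflTransGen_of_sum_eq_bottom hlt hx' hy' hx's hy's).trans (symm hyy'))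

/-- The diagonal slab `B(d,m₁,m₂) = {x ∈ [n₁-1]×⋯×[n_d-1] : m₁ ≤ ∑ xᵢ ≤ m₂}` is
grid-connected provided `m₂ - m₁ ≥ d`, or `m₁ = d`, or `m₂ = ∑ nᵢ - d`. -/
theorem stmt_13 (d : ℕ) (hd : 1 ≤ d) (n : Fin d → ℕ) (hn : ∀ i, 2 ≤ n i)
    (m₁ m₂ : ℕ) (h1 : d ≤ m₁) (h12 : m₁ ≤ m₂) (h2 : m₂ ≤ (∑ i, n i) - d)
    (hcase : d ≤ m₂ - m₁ ∨ m₁ = d ∨ m₂ = (∑ i, n i) - d) :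
    ∀ x y : Fin d → ℕ,
      ((∀ i, 1 ≤ x i ∧ x i ≤ n i - 1) ∧ m₁ ≤ ∑ i, x i ∧ ∑ i, x i ≤ m₂) →
      ((∀ i, 1 ≤ y i ∧ y i ≤ n i - 1) ∧ m₁ ≤ ∑ i, y i ∧ ∑ i, y i ≤ m₂) →
      Relation.ReflTransGen
        (fun a b =>
          ((∀ i, 1 ≤ a i ∧ a i ≤ n i - 1) ∧ m₁ ≤ ∑ i, a i ∧ ∑ i, a i ≤ m₂) ∧
          ((∀ i, 1 ≤ b i ∧ b i ≤ n i - 1) ∧ m₁ ≤ ∑ i, b i ∧ ∑ i, b i ≤ m₂) ∧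
          gridAdjTuple a b)
        x y :=
  stmt_13_general d n m₁ m₂ h1 h12 hcase
end
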